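/- Let l ≥ 6 be an integer with l ≡ 2 (mod 4). Then the alternating 2-edge-colored cycle of length l admits no homomorphism to any 2-edge-colored graph on at most 4 vertices; hence its 2-edge-colored chromatic number is at least 5. -/

import Mathlib

/-- A 2-edge-colored graph: each edge is blue or red (not both), no loops. -/
structure TwoECGraph (V : Type*) where
  blue : V → V → Prop
  red : V → V → Prop
  blue_symm : ∀ u v, blue u v → blue v u
  red_symm : ∀ u v, red u v → red v u
  blue_irrefl : ∀ v, ¬ blue v v
  red_irrefl : ∀ v, ¬ red v v
  not_both : ∀ u v, blue u v → ¬ red u v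

/-- The underlying simple graph of a 2-edge-colored graph. -/
def TwoECGraph.underlying {V : Type*} (G : TwoECGraph V) : SimpleGraph V where
  Adj u v := G.blue u v ∨ G.red u v
  symm := ⟨fun u v h => h.elim (fun h => Or.inl (G.blue_symm u v h)) (fun h => Or.inr (G.red_symm u v h))⟩
  loopless := ⟨fun v h => h.elim (G.blue_irrefl v) (G.red_irrefl v)⟩

/-- Homomorphisms of 2-edge-colored graphs. -/
def TwoECGraph.IsHom {V W : Type*} (G : TwoECGraph V) (H : TwoECGraph W)
    (φ : V → W) : Prop :=
  (∀ u v, G.blue u v → H.blue (φ u) (φ v)) ∧ (∀ u v, G.red u v → H.red (φ u) (φ v))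

/-!
A homomorphism of the alternating cycle of length `l = 2m` into `H`, read two edges at a time,
is a closed walk of odd length `m` along `BlueRed` (a blue edge followed by a red one).
Cutting an odd closed walk at a repeated vertex leaves a shorter odd closed walk, so on at most
four vertices there would be one of length `1` or `3`. Length `1` colours an edge both blue and
red. In a triangle, the middle vertex of each step is either the opposite corner or the unique
vertex outside the triangle, and the middle vertices of two consecutive steps can neither
coincide nor both be opposite corners without colouring an edge twice.
-/

def IsClosedWalk {α : Type*} (R : α → α → Prop) (n : ℕ) (ψ : ℕ → α) : Prop :=
  ψ n = ψ 0 ∧ ∀ k < n, R (ψ k) (ψ (k + 1))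

namespace IsClosedWalk

variable {α : Type*} {R : α → α → Prop} {m i j : ℕ} {ψ : ℕ → α}

theorem segment (hψ : IsClosedWalk R m ψ) (hij : i ≤ j) (hjm : j ≤ m) (heq : ψ i = ψ j) :
    IsClosedWalk R (j - i) (fun k => ψ (i + k)) := by
  refine ⟨by simpa [Nat.add_sub_cancel' hij] using heq.symm, fun k hk => ?_⟩
  simpa only [Nat.add_assoc] using hψ.2 (i + k) (by omega)

theorem excise (hψ : IsClosedWalk R m ψ) (hij : i ≤ j) (hjm : j < m) (heq : ψ i = ψ j) :
    IsClosedWalk R (m - (j - i)) (fun k => if k ≤ i then ψ k else ψ (k + (j - i))) := by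
  refine ⟨?_, fun k hk => ?_⟩
  · dsimp only
    rw [if_neg (by omega), Nat.sub_add_cancel (by omega)]
    exact hψ.1
  · dsimp only
    rcases lt_trichotomy k i with hki | rfl | hki
    · rw [if_pos hki.le, if_pos (Nat.succ_le_of_lt hki)]
      exact hψ.2 k (by omega)
    · rw [if_pos le_rfl, if_neg (by omega), heq, show k + 1 + (j - k) = j + 1 by omega]
      exact hψ.2 j hjm
    · rw [if_neg (by omega), if_neg (by omega), show k + 1 + (j - i) = k + (j - i) + 1 by omega]
      exact hψ.2 (k + (j - i)) (by omega)

end IsClosedWalk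

theorem exists_lt_le_card_apply_eq {α : Type*} [Fintype α] (ψ : ℕ → α) :
    ∃ i j, i < j ∧ j ≤ Fintype.card α ∧ ψ i = ψ j := by
  obtain ⟨a, b, hab, heq⟩ :=
    Fintype.exists_ne_map_eq_of_card_lt (fun k : Fin (Fintype.card α + 1) => ψ k) (by simp)
  rcases lt_or_gt_of_ne (Fin.val_ne_of_ne hab) with h | h
  · exact ⟨a, b, h, Nat.lt_succ_iff.mp b.2, heq⟩
  · exact ⟨b, a, h, Nat.lt_succ_iff.mp a.2, heq.symm⟩

theorem IsClosedWalk.exists_odd_le_card {α : Type*} [Fintype α] {R : α → α → Prop} {m : ℕ}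
    {ψ : ℕ → α} (hψ : IsClosedWalk R m ψ) (hm : Odd m) :
    ∃ n ψ', Odd n ∧ n ≤ Fintype.card α ∧ IsClosedWalk R n ψ' := by
  induction m using Nat.strong_induction_on generalizing ψ with
  | _ m ih =>
    by_cases hmc : m ≤ Fintype.card α
    · exact ⟨m, ψ, hm, hmc, hψ⟩
    obtain ⟨i, j, hij, hjc, heq⟩ := exists_lt_le_card_apply_eq ψ
    have hsplit : m = (j - i) + (m - (j - i)) := by omega
    rcases Nat.even_or_odd (j - i) with hev | hodd
    · exact ih _ (by omega) (hψ.excise hij.le (by omega) heq)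
        (by rw [hsplit, Nat.odd_add'] at hm; exact hm.mpr hev)
    · exact ih _ (by omega) (hψ.segment hij.le (by omega) heq) hodd

theorem Finset.eq_of_notMem_of_card_le_succ {α : Type*} [Fintype α] [DecidableEq α]
    {s : Finset α} (hs : Fintype.card α ≤ s.card + 1) {x y : α} (hx : x ∉ s) (hy : y ∉ s) :
    x = y := by
  have hcompl : sᶜ.card ≤ 1 := by rw [Finset.card_compl]; omega
  exact Finset.card_le_one.mp hcompl x (by simpa) y (by simpa)

namespace TwoECGraph

variable {W : Type*} (H : TwoECGraph W)

def BlueRed (u v : W) : Prop :=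
  ∃ x, H.blue u x ∧ H.red x v

variable {H}

theorem blueRed_irrefl (u : W) : ¬ H.BlueRed u u :=
  fun ⟨x, hb, hr⟩ => H.not_both u x hb (H.red_symm x u hr)

theorem mid_ne_and_not_swap {u a v b w : W} (hua : H.blue u a) (hav : H.red a v)
    (hvb : H.blue v b) (hbw : H.red b w) : a ≠ b ∧ ¬ (a = w ∧ b = u) := by
  refine ⟨?_, ?_⟩
  · rintro rfl
    exact H.not_both v a hvb (H.red_symm a v hav)
  · rintro ⟨rfl, rfl⟩
    exact H.not_both _ _ hua hbw

theorem not_blueRed_triangle [Fintype W] (hcard : Fintype.card W ≤ 4) {u v w : W}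
    (huv : H.BlueRed u v) (hvw : H.BlueRed v w) (hwu : H.BlueRed w u) : False := by
  classical
  have hne : u ≠ v ∧ u ≠ w ∧ v ≠ w := by
    refine ⟨?_, ?_, ?_⟩ <;> rintro rfl <;> apply blueRed_irrefl (H := H) <;> assumption
  obtain ⟨a, hua, hav⟩ := huv
  obtain ⟨b, hvb, hbw⟩ := hvw
  obtain ⟨c, hwc, hcu⟩ := hwu
  set s : Finset W := {u, v, w}
  have houtside {x y : W} (hx : x ∉ s) (hy : y ∉ s) : x = y :=
    Finset.eq_of_notMem_of_card_le_succ
      (by rw [Finset.card_eq_three.mpr ⟨u, v, w, hne.1, hne.2.1, hne.2.2, rfl⟩]; omega) hx hy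
  have hout {x : W} (hu : x ≠ u) (hv : x ≠ v) (hw : x ≠ w) : x ∉ s := by
    simp [s, hu, hv, hw]
  have ne_of_blue {x y : W} (h : H.blue x y) : x ≠ y := H.underlying.ne_of_adj (Or.inl h)
  have ne_of_red {x y : W} (h : H.red x y) : x ≠ y := H.underlying.ne_of_adj (Or.inr h)
  have hab := mid_ne_and_not_swap hua hav hvb hbw
  have hbc := mid_ne_and_not_swap hvb hbw hwc hcu
  have hca := mid_ne_and_not_swap hwc hcu hua hav
  by_cases haw : a = w
  · have hb : b ∉ s := hout (fun h => hab.2 ⟨haw, h⟩) (ne_of_blue hvb).symm (ne_of_red hbw)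
    have hc : c ∉ s := hout (ne_of_red hcu) (fun h => hca.2 ⟨h, haw⟩) (ne_of_blue hwc).symm
    exact hbc.1 (houtside hb hc)
  have ha : a ∉ s := hout (ne_of_blue hua).symm (ne_of_red hav) haw
  by_cases hbu : b = u
  · have hc : c ∉ s := hout (ne_of_red hcu) (fun h => hbc.2 ⟨hbu, h⟩) (ne_of_blue hwc).symm
    exact hca.1 (houtside hc ha)
  · exact hab.1 (houtside ha (hout hbu (ne_of_blue hvb).symm (ne_of_red hbw)))

theorem not_isClosedWalk_blueRed_of_odd [Fintype W] (hcard : Fintype.card W ≤ 4) {n : ℕ}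
    (hn : Odd n) (ψ : ℕ → W) : ¬ IsClosedWalk H.BlueRed n ψ := by
  intro hψ
  obtain ⟨n, ψ, ⟨k, rfl⟩, hle, hclosed, hstep⟩ := hψ.exists_odd_le_card hn
  obtain rfl | rfl : k = 0 ∨ k = 1 := by omega
  · exact blueRed_irrefl (ψ 0) (hclosed ▸ hstep 0 (by norm_num))
  · exact not_blueRed_triangle hcard (hstep 0 (by norm_num)) (hstep 1 (by norm_num))
      (hclosed ▸ hstep 2 (by norm_num))

theorem isClosedWalk_blueRed_of_alternating {l : ℕ} (hl : Even l) {φ : ℕ → W}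
    (hφ : ∀ i < l, (Even i → H.blue (φ i) (φ ((i + 1) % l))) ∧
      (Odd i → H.red (φ i) (φ ((i + 1) % l)))) :
    IsClosedWalk H.BlueRed (l / 2) (fun k => φ (2 * k % l)) := by
  refine ⟨by simp [Nat.mul_div_cancel' (even_iff_two_dvd.mp hl)], fun k hk => ?_⟩
  have hblue := (hφ (2 * k) (by omega)).1 (even_two_mul k)
  have hred := (hφ (2 * k + 1) (by omega)).2 (odd_two_mul_add_one k)
  rw [Nat.mod_eq_of_lt (by omega : 2 * k + 1 < l)] at hblue
  show H.BlueRed (φ (2 * k % l)) (φ ((2 * k + 1 + 1) % l))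
  rw [Nat.mod_eq_of_lt (by omega : 2 * k < l)]
  exact ⟨φ (2 * k + 1), hblue, hred⟩

end TwoECGraph

theorem alternating_cycle_no_hom_to_four_vertices_general (l : ℕ)
    (hmod : l % 4 = 2) :
    ∀ (W : Type) (_ : Fintype W), Fintype.card W ≤ 4 →
      ∀ H : TwoECGraph W, ¬ ∃ φ : ℕ → W, ∀ i < l,
        (Even i → H.blue (φ i) (φ ((i + 1) % l))) ∧
        (Odd i → H.red (φ i) (φ ((i + 1) % l))) := by
  rintro W _ hcard H ⟨φ, hφ⟩
  exact TwoECGraph.not_isClosedWalk_blueRed_of_odd hcard (Nat.odd_iff.mpr (by omega)) _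
    (TwoECGraph.isClosedWalk_blueRed_of_alternating (Nat.even_iff.mpr (by omega)) hφ)

/-- For `l ≥ 6` with `l ≡ 2 (mod 4)`, the alternating 2-edge-colored
cycle of length `l` (whose edges `v i — v ((i+1) % l)` are blue for even `i` and red
for odd `i`) admits no homomorphism to any 2-edge-colored graph on at most 4 vertices;
hence its 2-edge-colored chromatic number is at least 5. -/
theorem alternating_cycle_no_hom_to_four_vertices (l : ℕ) (hl : 6 ≤ l)
    (hmod : l % 4 = 2) :
    ∀ (W : Type) (_ : Fintype W), Fintype.card W ≤ 4 →
      ∀ H : TwoECGraph W, ¬ ∃ φ : ℕ → W, ∀ i < l,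
        (Even i → H.blue (φ i) (φ ((i + 1) % l))) ∧
        (Odd i → H.red (φ i) (φ ((i + 1) % l))) :=
  alternating_cycle_no_hom_to_four_vertices_general l hmod
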